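/- For integers n, r, k with n ≥ r-1 ≥ 0, ∑_{j=r-1}^{n} S_r(n+1, j+1) · ĉ_j^{(k)} = ∑_{ℓ=1}^{r} (-1)^{r-ℓ} s(r,ℓ) · ∑_{i=0}^{n-r+ℓ} C(n-r+ℓ, i) · (-1)^i / (i+1)^k. -/

import Mathlib

open Finset

/-- Unsigned Stirling numbers of the first kind. -/
def stirling1 : ℕ → ℕ → ℕ
  | 0, 0 => 1
  | 0, _ + 1 => 0
  | _ + 1, 0 => 0
  | n + 1, k + 1 => n * stirling1 n (k + 1) + stirling1 n k

/-- Stirling numbers of the second kind. -/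
def stirling2 : ℕ → ℕ → ℕ
  | 0, 0 => 1
  | 0, _ + 1 => 0
  | _ + 1, 0 => 0
  | n + 1, k + 1 => (k + 1) * stirling2 n (k + 1) + stirling2 n k

/-- Unsigned r-Stirling numbers of the first kind. -/
def rStirling1 (r : ℕ) : ℕ → ℕ → ℕ
  | 0, m => if r = 0 ∧ m = 0 then 1 else 0
  | n + 1, m =>
    if n + 1 < r then 0
    else if n + 1 = r then (if m = r then 1 else 0)
    else n * rStirling1 r n m + (match m with | 0 => 0 | m' + 1 => rStirling1 r n m')

/-- r-Stirling numbers of the second kind. -/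
def rStirling2 (r : ℕ) : ℕ → ℕ → ℕ
  | 0, m => if r = 0 ∧ m = 0 then 1 else 0
  | n + 1, m =>
    if n + 1 < r then 0
    else if n + 1 = r then (if m = r then 1 else 0)
    else m * rStirling2 r n m + (match m with | 0 => 0 | m' + 1 => rStirling2 r n m')

/-- Poly-Cauchy numbers of the first kind `c_n^{(k)}`. -/
noncomputable def polyCauchy (k : ℤ) (n : ℕ) : ℝ :=
  ∑ ℓ ∈ range (n + 1), (-1 : ℝ) ^ (n - ℓ) * stirling1 n ℓ / ((ℓ : ℝ) + 1) ^ k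

/-- Poly-Cauchy numbers of the second kind `ĉ_n^{(k)}`. -/
noncomputable def polyCauchy2 (k : ℤ) (n : ℕ) : ℝ :=
  (-1 : ℝ) ^ n * ∑ ℓ ∈ range (n + 1), (stirling1 n ℓ : ℝ) / ((ℓ : ℝ) + 1) ^ k

/-- Poly-Cauchy polynomials of the first kind `c_n^{(k)}(z)`. -/
noncomputable def polyCauchyPoly (k : ℤ) (n : ℕ) (z : ℝ) : ℝ :=
  ∑ m ∈ range (n + 1), (stirling1 n m : ℝ) * (-1 : ℝ) ^ (n - m) *
    ∑ i ∈ range (m + 1), (m.choose i : ℝ) * z ^ (m - i) / ((i : ℝ) + 1) ^ k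

/-- Shifted poly-Cauchy numbers of the first kind `c_{n,α}^{(k)}`. -/
noncomputable def shiftedPolyCauchy (k : ℤ) (n : ℕ) (α : ℝ) : ℝ :=
  ∑ m ∈ range (n + 1), (stirling1 n m : ℝ) * (-1 : ℝ) ^ (n - m) / ((m : ℝ) + α) ^ k

/-- Shifted poly-Cauchy numbers of the second kind `ĉ_{n,α}^{(k)}`. -/
noncomputable def shiftedPolyCauchy2 (k : ℤ) (n : ℕ) (α : ℝ) : ℝ :=
  (-1 : ℝ) ^ n * ∑ m ∈ range (n + 1), (stirling1 n m : ℝ) / ((m : ℝ) + α) ^ k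

/-!
Let `L_k` be the linear functional on `ℝ[X]` with `L_k(X^i) = (i+1)^{-k}`. Then
`ĉ_j^{(k)} = L_k(P_j)` with `P_j = (-1)^j x(x+1)⋯(x+j-1)`, the falling factorial of `-x`, and
`L_k((1-x)^m) = ∑_i C(m,i) (-1)^i / (i+1)^k`. The polynomials `P_j` satisfy
`(j+1) P_j + P_{j+1} = (1-x) P_j`, which is exactly what the recurrence of the r-Stirling numbers
needs to collapse `∑_j S_r(n+1,j+1) P_j` to `(1-x)^{n+1-r} P_{r-1}`. Expanding
`x(x+1)⋯(x+r-2) = ∑_ℓ s(r,ℓ) (x-1)^{ℓ-1}` writes this as a combination of powers of `1-x`,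
and applying `L_k` gives the identity.
-/

open Polynomial

theorem stirling1_eq_stirlingFirst : stirling1 = Nat.stirlingFirst := by
  ext n k
  induction n generalizing k with
  | zero => cases k <;> rfl
  | succ n ih =>
    cases k with
    | zero => rfl
    | succ k => rw [Nat.stirlingFirst_succ_succ, ← ih, ← ih]; rfl

theorem coeff_ascPochhammer (S : Type*) [Semiring S] (j ℓ : ℕ) :
    (ascPochhammer S j).coeff ℓ = Nat.stirlingFirst j ℓ := by
  induction j generalizing ℓ with
  | zero => cases ℓ <;> simp [coeff_one]
  | succ j ih =>
    rw [ascPochhammer_succ_right, mul_add, coeff_add, ← C_eq_natCast, coeff_mul_C]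
    cases ℓ with
    | zero => cases j <;> simp [ih]
    | succ ℓ =>
      rw [coeff_mul_X, ih, ih, Nat.stirlingFirst_succ_succ, add_comm, Nat.cast_comm]
      push_cast; rfl

theorem ascPochhammer_eq_sum_stirlingFirst (S : Type*) [Semiring S] (j : ℕ) :
    ascPochhammer S j = ∑ ℓ ∈ range (j + 1), (Nat.stirlingFirst j ℓ : S[X]) * X ^ ℓ := by
  ext ℓ
  simp only [finsetSum_coeff, ← C_eq_natCast, coeff_C_mul_X_pow, coeff_ascPochhammer,
    sum_ite_eq, mem_range]
  split_ifs with h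
  · rfl
  · rw [Nat.stirlingFirst_eq_zero_of_lt (by omega), Nat.cast_zero]

theorem ascPochhammer_eq_sum_stirlingFirst_mul_X_sub_one_pow (R : Type*) [CommRing R] (q : ℕ) :
    ascPochhammer R q =
      ∑ m ∈ range (q + 1), (Nat.stirlingFirst (q + 1) (m + 1) : R[X]) * (X - 1) ^ m := by
  have hcomp : (ascPochhammer R q).comp (X + 1) =
      ∑ m ∈ range (q + 1), (Nat.stirlingFirst (q + 1) (m + 1) : R[X]) * X ^ m := by
    refine isRegular_X.left ?_
    dsimp only
    rw [← ascPochhammer_succ_left, ascPochhammer_eq_sum_stirlingFirst, sum_range_succ',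
      Nat.stirlingFirst_succ_zero, Nat.cast_zero, zero_mul, add_zero, mul_sum]
    exact sum_congr rfl fun m _ => by ring
  have hshift := congrArg (fun p => p.comp (X - 1)) hcomp
  simpa [comp_assoc, Polynomial.sum_comp] using hshift

theorem rStirling2_self_left (r m : ℕ) : rStirling2 r r m = if m = r then 1 else 0 := by
  cases r <;> simp [rStirling2]

theorem rStirling2_succ_succ {r n : ℕ} (h : r ≤ n) (m : ℕ) :
    rStirling2 r (n + 1) (m + 1) = (m + 1) * rStirling2 r n (m + 1) + rStirling2 r n m := by
  rw [rStirling2, if_neg (by omega), if_neg (by omega)]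

theorem rStirling2_eq_zero_of_lt {r n m : ℕ} (h : n < m) : rStirling2 r n m = 0 := by
  induction n generalizing m with
  | zero => rw [rStirling2, if_neg (by omega)]
  | succ n ih =>
    obtain ⟨m, rfl⟩ : ∃ m', m = m' + 1 := ⟨m - 1, by omega⟩
    simp only [rStirling2]
    split_ifs
    all_goals first | rfl | omega | simp [ih (by omega : n < m), ih (by omega : n < m + 1)]

theorem rStirling2_eq_zero_of_lt_r {r n m : ℕ} (h : m < r) : rStirling2 r n m = 0 := by
  induction n generalizing m with
  | zero => rw [rStirling2, if_neg (by omega)]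
  | succ n ih =>
    cases m with
    | zero => simp only [rStirling2]; split_ifs <;> first | rfl | omega
    | succ m =>
      simp only [rStirling2]
      split_ifs
      all_goals first | rfl | omega | simp [ih h, ih (Nat.lt_of_succ_lt h)]

theorem sum_rStirling2_mul_of_recurrence {A : Type*} [CommSemiring A] (P : ℕ → A) (c : A)
    (hP : ∀ j : ℕ, ((j : A) + 1) * P j + P (j + 1) = c * P j) {r N : ℕ} (hr : 0 < r)
    (hrN : r ≤ N) :
    ∑ j ∈ range N, (rStirling2 r N (j + 1) : A) * P j = c ^ (N - r) * P (r - 1) := by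
  induction N, hrN using Nat.le_induction with
  | base =>
    rw [sum_eq_single (r - 1), rStirling2_self_left, if_pos (by omega), Nat.sub_self]
    · simp
    · intro j _ hj
      rw [rStirling2_self_left, if_neg (by omega), Nat.cast_zero, zero_mul]
    · intro h; exact absurd (mem_range.2 (by omega)) h
  | succ N hrN ih =>
    have hsplit : ∀ j, (rStirling2 r (N + 1) (j + 1) : A) * P j =
        (rStirling2 r N (j + 1) : A) * (((j : A) + 1) * P j) + (rStirling2 r N j : A) * P j := by
      intro j
      rw [rStirling2_succ_succ hrN]
      push_cast; ring
    calc ∑ j ∈ range (N + 1), (rStirling2 r (N + 1) (j + 1) : A) * P j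
        = ∑ j ∈ range N, (rStirling2 r N (j + 1) : A) * (((j : A) + 1) * P j + P (j + 1)) := by
          simp only [hsplit, sum_add_distrib]
          rw [sum_range_succ, sum_range_succ', rStirling2_eq_zero_of_lt (by omega),
            rStirling2_eq_zero_of_lt_r hr]
          simp [mul_add, sum_add_distrib]
      _ = c * ∑ j ∈ range N, (rStirling2 r N (j + 1) : A) * P j := by
          rw [mul_sum]; exact sum_congr rfl fun j _ => by rw [hP]; ring
      _ = c ^ (N + 1 - r) * P (r - 1) := by
          rw [ih, ← mul_assoc, ← pow_succ', Nat.sub_add_comm hrN]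

theorem sum_rStirling2_mul_neg_one_pow_mul_ascPochhammer (R : Type*) [CommRing R] {r N : ℕ}
    (hr : 0 < r) (hrN : r ≤ N) :
    ∑ j ∈ range N, (rStirling2 r N (j + 1) : R[X]) * (C ((-1) ^ j) * ascPochhammer R j) =
      (1 - X) ^ (N - r) * (C ((-1) ^ (r - 1)) * ascPochhammer R (r - 1)) := by
  refine sum_rStirling2_mul_of_recurrence _ _ (fun j => ?_) hr hrN
  rw [ascPochhammer_succ_right]
  simp only [map_pow, map_neg, map_one]
  ring

theorem one_sub_X_pow_mul_ascPochhammer (R : Type*) [CommRing R] {r n : ℕ} (hr : 0 < r)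
    (hrn : r ≤ n + 1) :
    (1 - X) ^ (n + 1 - r) * (C ((-1) ^ (r - 1)) * ascPochhammer R (r - 1)) =
      ∑ ℓ ∈ Icc 1 r,
        C ((-1) ^ (r - ℓ) * (Nat.stirlingFirst r ℓ : R)) * (1 - X) ^ (n + ℓ - r) := by
  obtain ⟨q, rfl⟩ : ∃ q, r = q + 1 := ⟨r - 1, by omega⟩
  rw [← Ico_add_one_right_eq_Icc, sum_Ico_eq_sum_range, Nat.add_sub_cancel,
    ascPochhammer_eq_sum_stirlingFirst_mul_X_sub_one_pow, mul_sum, mul_sum]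
  refine sum_congr rfl fun m hm => ?_
  obtain ⟨d, rfl⟩ : ∃ d, q = m + d := ⟨q - m, by rw [mem_range] at hm; omega⟩
  rw [show m + d + 1 - (1 + m) = d by omega,
    show n + (1 + m) - (m + d + 1) = n + 1 - (m + d + 1) + m by omega,
    show X - 1 = (-1) * (1 - X : R[X]) by ring, add_comm 1 m]
  simp only [map_mul, map_pow, map_neg, map_one, map_natCast, pow_add, mul_pow]
  have hsign : ((-1 : R[X]) ^ m) * (-1) ^ m = 1 := by
    rw [← mul_pow, neg_one_mul, neg_neg, one_pow]
  linear_combination ((Nat.stirlingFirst (m + d + 1) (m + 1) : R[X]) * (-1) ^ d * (1 - X) ^ m *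
    (1 - X) ^ (n + 1 - (m + d + 1))) * hsign

/-- For `k ≥ 0`, `cauchyFunctional k p = ∫_{[0,1]^k} p(x₁⋯x_k)`, the integral through which
the poly-Cauchy numbers are defined. -/
noncomputable def cauchyFunctional (k : ℤ) : ℝ[X] →ₗ[ℝ] ℝ :=
  lsum fun i => LinearMap.toSpanSingleton ℝ ℝ (1 / ((i : ℝ) + 1) ^ k)

theorem cauchyFunctional_monomial (k : ℤ) (i : ℕ) (a : ℝ) :
    cauchyFunctional k (monomial i a) = a / ((i : ℝ) + 1) ^ k := by
  simp [cauchyFunctional, div_eq_mul_inv]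

theorem cauchyFunctional_C_mul (k : ℤ) (a : ℝ) (p : ℝ[X]) :
    cauchyFunctional k (C a * p) = a * cauchyFunctional k p := by
  rw [← smul_eq_C_mul, map_smul, smul_eq_mul]

theorem cauchyFunctional_ascPochhammer (k : ℤ) (j : ℕ) :
    cauchyFunctional k (ascPochhammer ℝ j) =
      ∑ ℓ ∈ range (j + 1), (Nat.stirlingFirst j ℓ : ℝ) / ((ℓ : ℝ) + 1) ^ k := by
  rw [ascPochhammer_eq_sum_stirlingFirst, map_sum]
  simp only [← C_eq_natCast, C_mul_X_pow_eq_monomial, cauchyFunctional_monomial]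

theorem cauchyFunctional_one_sub_X_pow (k : ℤ) (m : ℕ) :
    cauchyFunctional k ((1 - X) ^ m) =
      ∑ i ∈ range (m + 1), (m.choose i : ℝ) * (-1) ^ i / ((i : ℝ) + 1) ^ k := by
  rw [sub_eq_neg_add, add_pow, map_sum]
  refine sum_congr rfl fun i _ => ?_
  have hterm : (-X : ℝ[X]) ^ i * 1 ^ (m - i) * (m.choose i : ℝ[X]) =
      C ((m.choose i : ℝ) * (-1) ^ i) * X ^ i := by
    rw [neg_pow, one_pow, mul_one, map_mul, map_pow, map_neg, map_one, map_natCast]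
    ring
  rw [hterm, C_mul_X_pow_eq_monomial, cauchyFunctional_monomial]

theorem polyCauchy2_eq_neg_one_pow_mul_cauchyFunctional (k : ℤ) (j : ℕ) :
    polyCauchy2 k j = (-1) ^ j * cauchyFunctional k (ascPochhammer ℝ j) := by
  rw [cauchyFunctional_ascPochhammer, polyCauchy2, stirling1_eq_stirlingFirst]

theorem stmt7 (n r : ℕ) (k : ℤ) (hr : 1 ≤ r) (hn : r - 1 ≤ n) :
    ∑ j ∈ Finset.Icc (r - 1) n, (rStirling2 r (n + 1) (j + 1) : ℝ) * polyCauchy2 k j =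
      ∑ ℓ ∈ Finset.Icc 1 r, (-1 : ℝ) ^ (r - ℓ) * (stirling1 r ℓ : ℝ) *
        ∑ i ∈ Finset.range (n + ℓ - r + 1),
          ((n + ℓ - r).choose i : ℝ) * (-1 : ℝ) ^ i / ((i : ℝ) + 1) ^ k := by
  have hvanish : ∀ j ∈ range (n + 1), j ∉ Icc (r - 1) n →
      (rStirling2 r (n + 1) (j + 1) : ℝ) * polyCauchy2 k j = 0 := fun j hj hj' => by
    rw [rStirling2_eq_zero_of_lt_r (by simp only [mem_range, mem_Icc] at hj hj'; omega),
      Nat.cast_zero, zero_mul]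
  have hpoly :=
    (sum_rStirling2_mul_neg_one_pow_mul_ascPochhammer ℝ hr (N := n + 1) (by omega)).trans
      (one_sub_X_pow_mul_ascPochhammer ℝ hr (by omega))
  have hL := congrArg (cauchyFunctional k) hpoly
  simp only [map_sum, ← C_eq_natCast, cauchyFunctional_C_mul,
    cauchyFunctional_one_sub_X_pow] at hL
  rw [sum_subset (fun j hj => by simp only [mem_range, mem_Icc] at hj ⊢; omega) hvanish,
    stirling1_eq_stirlingFirst, ← hL]
  simp only [polyCauchy2_eq_neg_one_pow_mul_cauchyFunctional]
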